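/- arXiv:2209.13692 — 5 statements merged into one kernel-verified Lean document; each statement's English description precedes it below -/
import Mathlib

section
/- The now-predicate operator distributes over the separation logic connectives: for all state predicates p, q ⊆ Σ, ⊡(p ⊕ q) = ⊡p ⊕ ⊡q for each ⊕ ∈ {∩, ∪, *, -*}, where * is separating conjunction and -* is separating implication, interpreted in the state separation algebra on the left and the computation separation algebra on the right. -/
open Classical

/-- A separation algebra: a partial commutative monoid with a set of units. -/
structure SepAlg (α : Type*) where
  mul : α → α → Option α
  emp : Set α
  comm : ∀ a b, mul a b = mul b a
  assoc : ∀ a b c, (mul a b).bind (fun x => mul x c) = (mul b c).bind (fun y => mul a y)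
  unit_exists : ∀ s, ∃ u ∈ emp, mul s u = some s
  unit_undef : ∀ u u', u ∈ emp → u' ∈ emp → u ≠ u' → mul u u' = none

/-- A computation: a (possibly empty) history together with a current state,
representing a nonempty sequence of states. -/
abbrev Comp (α : Type*) := List α × α

/-- Multiplication of computations: share the history, multiply the current states. -/
noncomputable def compMul {α : Type*} (M : SepAlg α) (x y : Comp α) : Option (Comp α) :=
  if x.1 = y.1 then (M.mul x.2 y.2).map (fun s => (x.1, s)) else none

/-- Units of the computation algebra: computations whose last state is a unit. -/
def compEmp {α : Type*} (M : SepAlg α) : Set (Comp α) := { x | x.2 ∈ M.emp }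

/-- Separating conjunction of predicates over a partial multiplication. -/
def star {β : Type*} (mul : β → β → Option β) (b c : Set β) : Set β :=
  { x | ∃ y ∈ b, ∃ z ∈ c, mul y z = some x }

/-- Separating implication: p -* q = { γ | {γ} * p ⊆ q }. -/
def wand {β : Type*} (mul : β → β → Option β) (p q : Set β) : Set β :=
  { y | star mul {y} p ⊆ q }

/-- A predicate is intuitionistic if it absorbs arbitrary frames: p * true ⊆ p. -/
def Intuitionistic {β : Type*} (mul : β → β → Option β) (p : Set β) : Prop :=
  star mul p Set.univ ⊆ p

/-- The now predicate ⊡p: computations whose current state satisfies p. -/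
def nowPred {α : Type*} (p : Set α) : Set (Comp α) := { x | x.2 ∈ p }

/-- The past predicate ◇p: computations with some strictly earlier state in p. -/
def pastPred {α : Type*} (p : Set α) : Set (Comp α) := { x | ∃ s ∈ x.1, s ∈ p }

/-- The weak past predicate ⟐p := ⊡p ∪ ◇p. -/
def weakPast {α : Type*} (p : Set α) : Set (Comp α) := nowPred p ∪ pastPred p

/-- A computation predicate is frameable if it is closed under stuttering the last state. -/
def Frameable {α : Type*} (c : Set (Comp α)) : Prop :=
  ∀ x ∈ c, ((x.1 ++ [x.2], x.2) : Comp α) ∈ c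

/-- The now predicate distributes over ∩, ∪, separating conjunction,
and separating implication. -/
theorem nowPred_distrib {α : Type*} (M : SepAlg α) (p q : Set α) :
    nowPred (p ∩ q) = nowPred p ∩ nowPred q ∧
    nowPred (p ∪ q) = nowPred p ∪ nowPred q ∧
    nowPred (star M.mul p q) = star (compMul M) (nowPred p) (nowPred q) ∧
    nowPred (wand M.mul p q) = wand (compMul M) (nowPred p) (nowPred q) := by
  refine ⟨rfl, rfl, ?_, ?_⟩
  · ext x
    constructor
    · rintro ⟨y, hy, z, hz, hyz⟩
      exact ⟨(x.1, y), hy, (x.1, z), hz, by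
        simp [compMul, hyz]⟩
    · rintro ⟨y, hy, z, hz, hyz⟩
      unfold compMul at hyz
      split at hyz
      · rcases Option.map_eq_some_iff.mp hyz with ⟨s, hs, hx⟩
        refine ⟨y.2, hy, z.2, hz, ?_⟩
        rw [hs]
        simp [← hx]
      · exact absurd hyz (by simp)
  · ext x
    constructor
    · rintro hx w ⟨y, hy, z, hz, hyz⟩
      cases Set.mem_singleton_iff.mp hy
      unfold compMul at hyz
      split at hyz
      · rcases Option.map_eq_some_iff.mp hyz with ⟨s, hs, hw⟩
        subst hw
        exact hx ⟨x.2, rfl, z.2, hz, hs⟩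
      · exact absurd hyz (by simp)
    · rintro hx a ⟨y, hy, z, hz, hyz⟩
      cases Set.mem_singleton_iff.mp hy
      have : ((x.1, a) : Comp α) ∈ nowPred q := by
        apply hx
        refine ⟨x, rfl, (x.1, z), hz, ?_⟩
        simp [compMul, hyz]
      exact this
end

section
/- For computation predicates b, c ⊆ Σ⁺ and any state predicate o ⊆ Σ, the following identity holds: (b * c) ∩ ◇o = (b ∩ ◇o) * c, where * is separating conjunction in the computation separation algebra. -/
open Classical

/-- (b * c) ∩ ◇o = (b ∩ ◇o) * c for computation predicates b, c
and state predicate o. -/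
theorem star_inter_past {α : Type*} (M : SepAlg α) (b c : Set (Comp α)) (o : Set α) :
    star (compMul M) b c ∩ pastPred o = star (compMul M) (b ∩ pastPred o) c := by
  ext x
  constructor
  · rintro ⟨⟨y, hy, z, hz, hmul⟩, hp⟩
    refine ⟨y, ⟨hy, ?_⟩, z, hz, hmul⟩
    simp only [compMul] at hmul
    split_ifs at hmul with h
    · obtain ⟨s, _, hs⟩ := Option.map_eq_some_iff.mp hmul
      obtain ⟨hs1, _⟩ := Prod.mk.injEq _ _ _ _ ▸ hs
      obtain ⟨t, ht, hto⟩ := hp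
      exact ⟨t, hs1.symm ▸ ht, hto⟩
  · rintro ⟨y, ⟨hy, hp⟩, z, hz, hmul⟩
    refine ⟨⟨y, hy, z, hz, hmul⟩, ?_⟩
    simp only [compMul] at hmul
    split_ifs at hmul with h
    · obtain ⟨s, _, hs⟩ := Option.map_eq_some_iff.mp hmul
      obtain ⟨hs1, _⟩ := Prod.mk.injEq _ _ _ _ ▸ hs
      obtain ⟨t, ht, hto⟩ := hp
      exact ⟨t, hs1 ▸ ht, hto⟩
end

section
/- For intuitionistic state predicates p, q ⊆ Σ and any computation predicates a, c ⊆ Σ⁺ with a frameable, the following inclusion of preconditions holds: (a ∩ ⟐p ∩ ⊡q) * c ⊆ (a * c) ∩ ⟐p ∩ ⊡q, where ⟐p = ⊡p ∪ ◇p. -/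
open Classical

/-- For intuitionistic state predicates p, q and computation
predicates a, c with a frameable: (a ∩ ⟐p ∩ ⊡q) * c ⊆ (a * c) ∩ ⟐p ∩ ⊡q. -/
theorem precondition_strengthening {α : Type*} (M : SepAlg α) (p q : Set α)
    (hp : Intuitionistic M.mul p) (hq : Intuitionistic M.mul q)
    (a c : Set (Comp α)) (ha : Frameable a) :
    star (compMul M) (a ∩ weakPast p ∩ nowPred q) c ⊆
      star (compMul M) a c ∩ weakPast p ∩ nowPred q := by
  rintro x ⟨y, ⟨⟨hya, hyp⟩, hyq⟩, z, hzc, hmul⟩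
  unfold compMul at hmul
  split_ifs at hmul with hhist
  obtain ⟨s, hs, hxs⟩ := Option.map_eq_some_iff.mp hmul
  subst hxs
  have hsq : s ∈ q := hq ⟨y.2, hyq, z.2, trivial, hs⟩
  refine ⟨⟨⟨y, hya, z, hzc, ?_⟩, ?_⟩, hsq⟩
  · unfold compMul; rw [if_pos hhist, hs]; rfl
  · rcases hyp with hnow | hpast
    · exact Or.inl (hp ⟨y.2, hnow, z.2, trivial, hs⟩)
    · exact Or.inr hpast
end

section
/- For the distributed counter with two cells l and r holding natural numbers that can only be incremented by 1 in atomic steps (each step increments exactly one of l or r by 1): if at some point in a computation l = a and r = b with b ≤ B, and at a later point r = B, then at some intermediate point (inclusive of endpoints) the sum l + r equals a + B. -/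
/-- Discrete intermediate value theorem: a sequence that grows by at most 1 per step
hits every value between g i and g j. -/
lemma discrete_ivt (g : ℕ → ℕ) (hg : ∀ n, g (n + 1) ≤ g n + 1)
    (i j c : ℕ) (hij : i ≤ j) (h1 : g i ≤ c) (h2 : c ≤ g j) :
    ∃ k, i ≤ k ∧ k ≤ j ∧ g k = c := by
  induction j with
  | zero =>
    interval_cases i
    exact ⟨0, le_refl _, le_refl _, le_antisymm h1 h2⟩
  | succ j ih =>
    rcases Nat.lt_or_ge c (g (j + 1)) with h | h
    · rcases Nat.eq_or_lt_of_le hij with h' | h'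
      · subst h'; omega
      · have hij' : i ≤ j := Nat.lt_succ_iff.mp h'
        have : c ≤ g j := by have := hg j; omega
        obtain ⟨k, hk1, hk2, hk3⟩ := ih hij' this
        exact ⟨k, hk1, Nat.le_succ_of_le hk2, hk3⟩
    · exact ⟨j + 1, hij, le_refl _, by omega⟩

/-- Distributed counter temporal interpolation. In a computation whose
steps increment exactly one of the two cells by 1 (or stutter), if at time i we have
l = a, r = b ≤ B and at a later time j we have r = B, then at some intermediate time
the sum l + r equals a + B. -/
theorem counter_interpolation (f : ℕ → ℕ × ℕ)
    (hstep : ∀ n, f (n + 1) = ((f n).1 + 1, (f n).2) ∨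
                  f (n + 1) = ((f n).1, (f n).2 + 1) ∨
                  f (n + 1) = f n)
    (i j a b B : ℕ) (hij : i ≤ j)
    (hla : (f i).1 = a) (hrb : (f i).2 = b) (hbB : b ≤ B)
    (hrj : (f j).2 = B) :
    ∃ k, i ≤ k ∧ k ≤ j ∧ (f k).1 + (f k).2 = a + B := by
  set g : ℕ → ℕ := fun n => (f n).1 + (f n).2 with hg
  have hstep' : ∀ n, g (n + 1) ≤ g n + 1 := by
    intro n
    rcases hstep n with h | h | h <;> simp [hg, h] <;> omega
  have hmono : ∀ n, (f n).1 ≤ (f (n + 1)).1 := by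
    intro n
    rcases hstep n with h | h | h <;> simp [h]
  have hmono' : Monotone (fun n => (f n).1) := monotone_nat_of_le_succ hmono
  have h1 : g i ≤ a + B := by simp [hg, hla, hrb]; omega
  have h2 : a + B ≤ g j := by
    have := hmono' hij
    simp only at this
    simp [hg, hrj]
    omega
  obtain ⟨k, hk1, hk2, hk3⟩ := discrete_ivt g hstep' i j (a + B) hij h1 h2
  exact ⟨k, hk1, hk2, hk3⟩
end

section
/- If a state predicate p ⊆ Σ is intuitionistic (p * Σ ⊆ p), then for any command language S the history predicate hist(p, S) is intuitionistic over the separation algebra of histories: hist(p, S) * HST ⊆ hist(p, S). -/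
open Classical

/-- A history: a flat prefix of states and commands, together with a final state. -/
abbrev Hist (α C : Type*) := List (α ⊕ C) × α

/-- Alternation: the given flat list is of the form σ₁.c₁.σ₂...σₙ.cₙ.σ_{n+1} with all
state blocks σᵢ nonempty, and its command word is the given list. -/
inductive Alt {α C : Type*} : List C → List (α ⊕ C) → Prop
  | base (s : α) (σ : List α) : Alt [] (Sum.inl s :: σ.map Sum.inl)
  | step (s : α) (σ : List α) (c : C) (w : List C) (l : List (α ⊕ C)) :
      Alt w l → Alt (c :: w) (Sum.inl s :: (σ.map Sum.inl ++ Sum.inr c :: l))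

/-- The flat sequence represented by a history. -/
def flatten {α C : Type*} (h : Hist α C) : List (α ⊕ C) := h.1 ++ [Sum.inl h.2]

/-- The history predicate hist(p, S): histories with a suffix σ₁.c₁...cₙ.σ_{n+1}
whose first state is in p and whose command word is in S. -/
def histPred {α C : Type*} (p : Set α) (S : Set (List C)) : Set (Hist α C) :=
  { h | ∃ pre suf, flatten h = pre ++ suf ∧
        (∃ s, suf.head? = some (Sum.inl s) ∧ s ∈ p) ∧
        ∃ w ∈ S, Alt w suf }

/-- Multiplication of histories: share the prefix, multiply the final states. -/
noncomputable def histMul {α C : Type*} (M : SepAlg α) (x y : Hist α C) :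
    Option (Hist α C) :=
  if x.1 = y.1 then (M.mul x.2 y.2).map (fun s => (x.1, s)) else none

/-!
A product of histories keeps the flat prefix and only multiplies the final state. A suffix
witnessing `hist(p, S)` ends in that final state, and replacing it there preserves alternation
and the command word. The first state of the suffix changes only when the suffix is the final
state alone; then it moves from `a ∈ p` to `a * b`, which lies in `p` because `p` is
intuitionistic.
-/

namespace Alt

variable {α C : Type*}

theorem ne_nil {w : List C} {L : List (α ⊕ C)} (h : Alt w L) : L ≠ [] := by
  cases h <;> simp

theorem dropLast_append {w : List C} {L : List (α ⊕ C)} (h : Alt w L) (b : α) :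
    Alt w (L.dropLast ++ [Sum.inl b]) := by
  induction h with
  | base s σ =>
    rcases σ.eq_nil_or_concat with rfl | ⟨σ, a, rfl⟩
    · simpa using Alt.base b ([] : List α)
    · simpa [List.dropLast_cons_of_ne_nil] using Alt.base (C := C) s (σ ++ [b])
  | step s σ c w l hl ih =>
    simpa [List.dropLast_cons_of_ne_nil, List.dropLast_append_of_ne_nil, hl.ne_nil]
      using Alt.step s σ c w _ ih

end Alt

theorem List.exists_eq_append_singleton_of_append_singleton_eq {β : Type*}
    {l pre suf : List β} {x : β} (h : l ++ [x] = pre ++ suf) (hsuf : suf ≠ []) :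
    ∃ t, l = pre ++ t ∧ suf = t ++ [x] := by
  rcases List.append_eq_append_iff.mp h with ⟨t, rfl, ht⟩ | ⟨t, rfl, rfl⟩
  · obtain ⟨rfl, rfl⟩ : t = [] ∧ suf = [x] := by
      simpa [hsuf] using List.append_eq_singleton_iff.mp ht.symm
    exact ⟨[], by simp, rfl⟩
  · exact ⟨t, rfl, rfl⟩

theorem mem_histPred_of_final_state {α C : Type*} {p : Set α} {S : Set (List C)}
    {l : List (α ⊕ C)} {a b : α} (h : (l, a) ∈ histPred p S) (hab : a ∈ p → b ∈ p) :
    (l, b) ∈ histPred p S := by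
  obtain ⟨pre, suf, hflat, ⟨s, hhead, hs⟩, w, hw, halt⟩ := h
  obtain ⟨t, rfl, rfl⟩ :=
    List.exists_eq_append_singleton_of_append_singleton_eq hflat halt.ne_nil
  refine ⟨pre, t ++ [Sum.inl b], by simp [flatten], ?_, w, hw,
    by simpa using halt.dropLast_append b⟩
  rcases t with _ | ⟨x, t⟩
  · obtain rfl : a = s := by simpa using hhead
    exact ⟨b, rfl, hab hs⟩
  · exact ⟨s, by simpa using hhead, hs⟩

theorem histMul_eq_some {α C : Type*} {M : SepAlg α} {x y z : Hist α C}
    (h : histMul M x y = some z) : z.1 = x.1 ∧ M.mul x.2 y.2 = some z.2 := by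
  unfold histMul at h
  split_ifs at h
  obtain ⟨s, hs, rfl⟩ := Option.map_eq_some_iff.mp h
  exact ⟨rfl, hs⟩

/-- If p is intuitionistic, then the history predicate hist(p, S) is
intuitionistic over the separation algebra of histories. -/
theorem histPred_intuitionistic {α C : Type*} (M : SepAlg α) (p : Set α)
    (S : Set (List C)) (hp : Intuitionistic M.mul p) :
    Intuitionistic (histMul M) (histPred p S : Set (Hist α C)) := by
  rintro ⟨l, s⟩ ⟨x, hx, y, -, hxy⟩
  obtain ⟨rfl, hs⟩ := histMul_eq_some hxy
  exact mem_histPred_of_final_state hx fun ha => hp ⟨x.2, ha, y.2, trivial, hs⟩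
end
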